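/- Separation principle for joint approximation: let P, Q be positive definite and suppose (i) e^{-ε₁} I ⪯ T^{-1} P_s T^{-T} ⪯ e^{ε₁} I where T = P^{1/2}, and (ii) e^{-ε₂} T^T Q T ⪯ T^T Q_s T ⪯ e^{ε₂} T^T Q T. Then e^{-(ε₁+ε₂)} Q^{1/2} P Q^{1/2} and Q_s^{1/2} P_s Q_s^{1/2} satisfy: λ_i(Q_s^{1/2} P_s Q_s^{1/2}) lies within factor e^{±(ε₁+ε₂)} of λ_i(Q^{1/2} P Q^{1/2}) for every i. -/

import Mathlib

open Matrix

/-- Eigenvalues of a matrix, sorted in ascending order (junk value `0` if the matrix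
is not Hermitian). -/
noncomputable def eigAsc {d : ℕ} (A : Matrix (Fin d) (Fin d) ℝ) : Fin d → ℝ :=
  if h : A.IsHermitian then h.eigenvalues ∘ Tuple.sort h.eigenvalues else 0

namespace Matrix.PosSemidef

open scoped ComplexOrder

/-- The positive semidefinite square root of a positive semidefinite matrix (the definition
of `Matrix.PosSemidef.sqrt` in Mathlib of December 2024, since removed). -/
noncomputable def sqrt {n : Type*} [Fintype n] [DecidableEq n] {𝕜 : Type*} [RCLike 𝕜]
    {A : Matrix n n 𝕜} (hA : A.PosSemidef) : Matrix n n 𝕜 :=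
  hA.1.eigenvectorUnitary.1 * diagonal ((↑) ∘ (√·) ∘ hA.1.eigenvalues) *
  (star hA.1.eigenvectorUnitary : Matrix n n 𝕜)

end Matrix.PosSemidef

/-!
Conjugating hypothesis (i) by `T` gives `e^{-ε₁} P ⪯ P_s ⪯ e^{ε₁} P`, and a congruence by
`Q_s^{1/2}` preserves this. By the Courant–Fischer comparison (`A ⪯ c B` with `c ≥ 0` forces
`λ_k(A) ≤ c λ_k(B)` for every `k`), the eigenvalues of `Q_s^{1/2} P_s Q_s^{1/2}` are within
`e^{±ε₁}` of those of `Q_s^{1/2} P Q_s^{1/2} = (Q_s^{1/2} T)(T Q_s^{1/2})`. As `XY` and `YX` have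
the same eigenvalues, these are the eigenvalues of `T Q_s T`, which by (ii) are within `e^{±ε₂}`
of those of `T Q T`, i.e. of `Q^{1/2} P Q^{1/2}`.
-/

open Module Submodule
open scoped MatrixOrder ComplexOrder RealInnerProductSpace InnerProductSpace

theorem Matrix.PosSemidef.sqrt_eq_cfcSqrt {n 𝕜 : Type*} [Fintype n] [DecidableEq n] [RCLike 𝕜]
    {A : Matrix n n 𝕜} (hA : A.PosSemidef) : hA.sqrt = CFC.sqrt A := by
  rw [CFC.sqrt_eq_cfc, cfc_nnreal_eq_real _ A, hA.1.cfc_eq, IsHermitian.cfc,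
    Unitary.conjStarAlgAut_apply, sqrt]
  simp only [Real.coe_sqrt, Real.coe_toNNReal']
  congr! 4
  funext i
  simp [hA.eigenvalues_nonneg i]

theorem exists_ne_zero_forall_inner_eq_zero {𝕜 E : Type*} [RCLike 𝕜] [NormedAddCommGroup E]
    [InnerProductSpace 𝕜 E] [FiniteDimensional 𝕜 E] (s : Finset E) (hs : s.card < finrank 𝕜 E) :
    ∃ x : E, x ≠ 0 ∧ ∀ u ∈ s, ⟪u, x⟫_𝕜 = 0 := by
  have hspan : span 𝕜 (s : Set E) ≠ ⊤ := fun h => by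
    have := finrank_span_finset_le_card (R := 𝕜) s
    rw [Set.finrank, h, finrank_top] at this
    omega
  obtain ⟨x, hx, hx0⟩ := exists_mem_ne_zero_of_ne_bot (orthogonal_eq_bot_iff.not.mpr hspan)
  exact ⟨x, hx0, fun u hu => inner_right_of_mem_orthogonal (subset_span hu) hx⟩

namespace LinearMap.IsSymmetric

section Eigenbasis

variable {ι E : Type*} [Fintype ι] [NormedAddCommGroup E] [InnerProductSpace ℝ E]
  {T : E →ₗ[ℝ] E} {b : OrthonormalBasis ι ℝ E} {μ : ι → ℝ}

theorem inner_map_self_eq_sum (hT : T.IsSymmetric) (hb : ∀ i, T (b i) = μ i • b i) (x : E) :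
    ⟪T x, x⟫ = ∑ i, μ i * ⟪b i, x⟫ ^ 2 := by
  rw [← b.sum_inner_mul_inner]
  refine Finset.sum_congr rfl fun i _ => ?_
  rw [hT, hb, real_inner_smul_right, real_inner_comm x]
  ring

theorem mul_norm_sq_le_inner_map_self (hT : T.IsSymmetric) (hb : ∀ i, T (b i) = μ i • b i)
    {m : ℝ} {x : E} (hm : ∀ i, ⟪b i, x⟫ ≠ 0 → m ≤ μ i) : m * ‖x‖ ^ 2 ≤ ⟪T x, x⟫ := by
  rw [hT.inner_map_self_eq_sum hb, ← b.sum_sq_inner_right, Finset.mul_sum]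
  refine Finset.sum_le_sum fun i _ => ?_
  by_cases h : ⟪b i, x⟫ = 0
  · simp [h]
  · exact mul_le_mul_of_nonneg_right (hm i h) (sq_nonneg _)

theorem inner_map_self_le_mul_norm_sq (hT : T.IsSymmetric) (hb : ∀ i, T (b i) = μ i • b i)
    {M : ℝ} {x : E} (hM : ∀ i, ⟪b i, x⟫ ≠ 0 → μ i ≤ M) : ⟪T x, x⟫ ≤ M * ‖x‖ ^ 2 := by
  rw [hT.inner_map_self_eq_sum hb, ← b.sum_sq_inner_right, Finset.mul_sum]
  refine Finset.sum_le_sum fun i _ => ?_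
  by_cases h : ⟪b i, x⟫ = 0
  · simp [h]
  · exact mul_le_mul_of_nonneg_right (hM i h) (sq_nonneg _)

end Eigenbasis

/-- A nonzero `x` orthogonal to the eigenvectors `a i`, `i < k`, and `b i`, `i > k`, exists for
dimension reasons, and `α k ‖x‖² ≤ ⟪S x, x⟫ ≤ ⟪T x, x⟫ ≤ β k ‖x‖²`. -/
theorem sortedEigenvalue_le_of_le {n : ℕ} {E : Type*} [NormedAddCommGroup E]
    [InnerProductSpace ℝ E] [FiniteDimensional ℝ E] {S T : E →ₗ[ℝ] E}
    (hS : S.IsSymmetric) (hT : T.IsSymmetric) (hST : S ≤ T)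
    {a b : OrthonormalBasis (Fin n) ℝ E} {α β : Fin n → ℝ} (hα : Monotone α) (hβ : Monotone β)
    (ha : ∀ i, S (a i) = α i • a i) (hb : ∀ i, T (b i) = β i • b i) (k : Fin n) : α k ≤ β k := by
  classical
  set U := (Finset.Iio k).image a ∪ (Finset.Ioi k).image b
  have hU : U.card < finrank ℝ E := by
    rw [finrank_eq_card_basis a.toBasis, Fintype.card_fin]
    calc U.card ≤ (Finset.Iio k).card + (Finset.Ioi k).card :=
          (Finset.card_union_le _ _).trans (add_le_add Finset.card_image_le Finset.card_image_le)
      _ < n := by rw [Fin.card_Iio, Fin.card_Ioi]; omega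
  obtain ⟨x, hx0, hx⟩ := exists_ne_zero_forall_inner_eq_zero U hU
  have hlow : α k * ‖x‖ ^ 2 ≤ ⟪S x, x⟫ := hS.mul_norm_sq_le_inner_map_self ha fun i hi =>
    hα <| not_lt.mp fun hik =>
      hi (hx _ (Finset.mem_union_left _ (Finset.mem_image_of_mem a (Finset.mem_Iio.mpr hik))))
  have hupp : ⟪T x, x⟫ ≤ β k * ‖x‖ ^ 2 := hT.inner_map_self_le_mul_norm_sq hb fun i hi =>
    hβ <| not_lt.mp fun hki =>
      hi (hx _ (Finset.mem_union_right _ (Finset.mem_image_of_mem b (Finset.mem_Ioi.mpr hki))))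
  have hSTx : ⟪S x, x⟫ ≤ ⟪T x, x⟫ := by
    simpa [inner_sub_left] using hST.inner_nonneg_left x
  exact le_of_mul_le_mul_right (hlow.trans (hSTx.trans hupp)) (by positivity)

end LinearMap.IsSymmetric

theorem eigAsc_mul_comm {n : ℕ} {A B : Matrix (Fin n) (Fin n) ℝ} (hAB : (A * B).IsHermitian)
    (hBA : (B * A).IsHermitian) : eigAsc (A * B) = eigAsc (B * A) := by
  have h := (hAB.eigenvalues_eq_eigenvalues_iff hBA).mpr (charpoly_mul_comm A B)
  simp only [eigAsc, dif_pos hAB, dif_pos hBA, h]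

theorem eigAsc_mul_mul_self_mul_comm {n : ℕ} {S T : Matrix (Fin n) (Fin n) ℝ}
    (hS : IsSelfAdjoint S) (hT : IsSelfAdjoint T) :
    eigAsc (S * (T * T) * S) = eigAsc (T * (S * S) * T) := by
  have hX : star (S * T) = T * S := by rw [star_mul, hS.star_eq, hT.star_eq]
  simpa only [hX, Matrix.mul_assoc] using
    eigAsc_mul_comm (IsSelfAdjoint.mul_star_self (S * T)).isHermitian
      (IsSelfAdjoint.star_mul_self (S * T)).isHermitian

namespace Matrix.IsHermitian

theorem conjugate_self {n : ℕ} {M S : Matrix (Fin n) (Fin n) ℝ} (hM : M.IsHermitian)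
    (hS : IsSelfAdjoint S) : (S * M * S).IsHermitian :=
  (hM.isSelfAdjoint.conjugate_self hS).isHermitian

variable {n : ℕ} {A B : Matrix (Fin n) (Fin n) ℝ}

theorem monotone_eigAsc (hA : A.IsHermitian) : Monotone (eigAsc A) := by
  rw [eigAsc, dif_pos hA]
  exact Tuple.monotone_sort _

theorem exists_orthonormalBasis_eigAsc (hA : A.IsHermitian) :
    ∃ b : OrthonormalBasis (Fin n) ℝ (EuclideanSpace ℝ (Fin n)),
      ∀ i, toEuclideanLin A (b i) = eigAsc A i • b i := by
  refine ⟨hA.eigenvectorBasis.reindex (Tuple.sort hA.eigenvalues).symm, fun i => ?_⟩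
  rw [eigAsc, dif_pos hA, OrthonormalBasis.reindex_apply, Equiv.symm_symm]
  exact WithLp.ofLp_injective _ (hA.mulVec_eigenvectorBasis _)

theorem eigAsc_le_mul_of_le_smul (hA : A.IsHermitian) (hB : B.IsHermitian) {c : ℝ} (hc : 0 ≤ c)
    (h : A ≤ c • B) (k : Fin n) : eigAsc A k ≤ c * eigAsc B k := by
  obtain ⟨a, ha⟩ := hA.exists_orthonormalBasis_eigAsc
  obtain ⟨b, hb⟩ := hB.exists_orthonormalBasis_eigAsc
  refine (isSymmetric_toEuclideanLin_iff.mpr hA).sortedEigenvalue_le_of_le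
    ((isSymmetric_toEuclideanLin_iff.mpr hB).smul (conj_trivial c)) ?_ hA.monotone_eigAsc
    (hB.monotone_eigAsc.const_mul hc) ha (fun i => by rw [LinearMap.smul_apply, hb, smul_smul]) k
  rw [LinearMap.le_def, ← map_smul, ← map_sub, isPositive_toEuclideanLin_iff]
  exact h

theorem mul_eigAsc_le_of_smul_le (hA : A.IsHermitian) (hB : B.IsHermitian) {c : ℝ} (hc : 0 ≤ c)
    (h : c • B ≤ A) (k : Fin n) : c * eigAsc B k ≤ eigAsc A k := by
  obtain ⟨a, ha⟩ := hA.exists_orthonormalBasis_eigAsc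
  obtain ⟨b, hb⟩ := hB.exists_orthonormalBasis_eigAsc
  refine
    ((isSymmetric_toEuclideanLin_iff.mpr hB).smul (conj_trivial c)).sortedEigenvalue_le_of_le
    (isSymmetric_toEuclideanLin_iff.mpr hA) ?_ (hB.monotone_eigAsc.const_mul hc) hA.monotone_eigAsc
    (fun i => by rw [LinearMap.smul_apply, hb, smul_smul]) ha k
  rw [LinearMap.le_def, ← map_smul, ← map_sub, isPositive_toEuclideanLin_iff]
  exact h

end Matrix.IsHermitian

/-- On matrices `≤` is the Loewner order. -/
def ExpApprox {α : Type*} [LE α] [SMul ℝ α] (ε : ℝ) (a b : α) : Prop :=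
  Real.exp (-ε) • b ≤ a ∧ a ≤ Real.exp ε • b

namespace ExpApprox

theorem trans {ε₁ ε₂ x y z : ℝ} (hxy : ExpApprox ε₁ x y) (hyz : ExpApprox ε₂ y z) :
    ExpApprox (ε₁ + ε₂) x z := by
  simp only [ExpApprox, smul_eq_mul, neg_add, Real.exp_add, mul_assoc] at *
  exact ⟨(mul_le_mul_of_nonneg_left hyz.1 (Real.exp_pos _).le).trans hxy.1,
    hxy.2.trans (mul_le_mul_of_nonneg_left hyz.2 (Real.exp_pos _).le)⟩

variable {n : ℕ} {ε : ℝ} {A B : Matrix (Fin n) (Fin n) ℝ}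

theorem conj (h : ExpApprox ε A B) {S : Matrix (Fin n) (Fin n) ℝ} (hS : IsSelfAdjoint S) :
    ExpApprox ε (S * A * S) (S * B * S) := by
  simpa only [ExpApprox, Matrix.mul_smul, Matrix.smul_mul] using
    And.intro (hS.conjugate_le_conjugate h.1) (hS.conjugate_le_conjugate h.2)

theorem of_inv_conj_one {T : Matrix (Fin n) (Fin n) ℝ} (h : ExpApprox ε (T⁻¹ * A * T⁻¹) 1)
    (hT : IsSelfAdjoint T) (hTdet : IsUnit T.det) : ExpApprox ε A (T * T) := by
  simpa only [Matrix.mul_assoc, nonsing_inv_mul _ hTdet, Matrix.mul_one, Matrix.one_mul,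
    mul_nonsing_inv_cancel_left _ _ hTdet] using h.conj hT

theorem eigAsc (h : ExpApprox ε A B) (hA : A.IsHermitian) (hB : B.IsHermitian) (k : Fin n) :
    ExpApprox ε (eigAsc A k) (eigAsc B k) :=
  ⟨hA.mul_eigAsc_le_of_smul_le hB (Real.exp_pos _).le h.1 k,
    hA.eigAsc_le_mul_of_le_smul hB (Real.exp_pos _).le h.2 k⟩

end ExpApprox

theorem separation_principle_general
    (n : ℕ) (P Q Ps Qs : Matrix (Fin n) (Fin n) ℝ) (ε₁ ε₂ : ℝ)
    (hP : P.PosDef) (hQ : Q.PosDef) (hPs : Ps.PosDef) (hQs : Qs.PosDef)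
    (h1low : ((hP.posSemidef.sqrt)⁻¹ * Ps * ((hP.posSemidef.sqrt)⁻¹)ᵀ -
        Real.exp (-ε₁) • (1 : Matrix (Fin n) (Fin n) ℝ)).PosSemidef)
    (h1upp : (Real.exp ε₁ • (1 : Matrix (Fin n) (Fin n) ℝ) -
        (hP.posSemidef.sqrt)⁻¹ * Ps * ((hP.posSemidef.sqrt)⁻¹)ᵀ).PosSemidef)
    (h2low : ((hP.posSemidef.sqrt)ᵀ * Qs * hP.posSemidef.sqrt -
        Real.exp (-ε₂) • ((hP.posSemidef.sqrt)ᵀ * Q * hP.posSemidef.sqrt)).PosSemidef)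
    (h2upp : (Real.exp ε₂ • ((hP.posSemidef.sqrt)ᵀ * Q * hP.posSemidef.sqrt) -
        (hP.posSemidef.sqrt)ᵀ * Qs * hP.posSemidef.sqrt).PosSemidef) :
    ∀ i : Fin n,
      Real.exp (-(ε₁ + ε₂)) * eigAsc (hQ.posSemidef.sqrt * P * hQ.posSemidef.sqrt) i ≤
        eigAsc (hQs.posSemidef.sqrt * Ps * hQs.posSemidef.sqrt) i ∧
      eigAsc (hQs.posSemidef.sqrt * Ps * hQs.posSemidef.sqrt) i ≤
        Real.exp (ε₁ + ε₂) * eigAsc (hQ.posSemidef.sqrt * P * hQ.posSemidef.sqrt) i := by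
  intro k
  simp only [PosSemidef.sqrt_eq_cfcSqrt] at h1low h1upp h2low h2upp ⊢
  set T := CFC.sqrt P
  have hT : IsSelfAdjoint T := .of_nonneg (CFC.sqrt_nonneg P)
  have hSs : IsSelfAdjoint (CFC.sqrt Qs) := .of_nonneg (CFC.sqrt_nonneg Qs)
  have hSq : IsSelfAdjoint (CFC.sqrt Q) := .of_nonneg (CFC.sqrt_nonneg Q)
  have hTT : T * T = P := CFC.sqrt_mul_sqrt_self P hP.posSemidef.nonneg
  have hTdet : IsUnit T.det := (isUnit_iff_isUnit_det T).mp
    ((CFC.isUnit_sqrt_iff P hP.posSemidef.nonneg).mpr hP.isUnit)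
  have hTt : Tᵀ = T := (conjTranspose_eq_transpose_of_trivial T).symm.trans hT
  rw [transpose_nonsing_inv, hTt] at h1low h1upp
  rw [hTt] at h2low h2upp
  have h1 : ExpApprox ε₁ Ps P := hTT ▸ ExpApprox.of_inv_conj_one ⟨h1low, h1upp⟩ hT hTdet
  have hSsSs : CFC.sqrt Qs * CFC.sqrt Qs = Qs := CFC.sqrt_mul_sqrt_self Qs hQs.posSemidef.nonneg
  have hSqSq : CFC.sqrt Q * CFC.sqrt Q = Q := CFC.sqrt_mul_sqrt_self Q hQ.posSemidef.nonneg
  have approx₁ := (h1.conj hSs).eigAsc (hPs.1.conjugate_self hSs) (hP.1.conjugate_self hSs) k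
  have approx₂ :=
    ExpApprox.eigAsc ⟨h2low, h2upp⟩ (hQs.1.conjugate_self hT) (hQ.1.conjugate_self hT) k
  rw [← hTT, eigAsc_mul_mul_self_mul_comm hSs hT, hSsSs] at approx₁
  rw [← hSqSq, ← eigAsc_mul_mul_self_mul_comm hSq hT, hTT] at approx₂
  simpa only [ExpApprox, smul_eq_mul] using approx₁.trans approx₂

/-- Separation principle for joint approximation: if
`e^{-ε₁} I ⪯ T⁻¹ P_s T⁻ᵀ ⪯ e^{ε₁} I` with `T = P^{1/2}`, and
`e^{-ε₂} Tᵀ Q T ⪯ Tᵀ Q_s T ⪯ e^{ε₂} Tᵀ Q T`, then every eigenvalue of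
`Q_s^{1/2} P_s Q_s^{1/2}` lies within factor `e^{±(ε₁+ε₂)}` of the corresponding
eigenvalue of `Q^{1/2} P Q^{1/2}`. -/
theorem separation_principle
    (n : ℕ) (P Q Ps Qs : Matrix (Fin n) (Fin n) ℝ) (ε₁ ε₂ : ℝ)
    (hε₁ : 0 < ε₁) (hε₂ : 0 < ε₂)
    (hP : P.PosDef) (hQ : Q.PosDef) (hPs : Ps.PosDef) (hQs : Qs.PosDef)
    (h1low : ((hP.posSemidef.sqrt)⁻¹ * Ps * ((hP.posSemidef.sqrt)⁻¹)ᵀ -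
        Real.exp (-ε₁) • (1 : Matrix (Fin n) (Fin n) ℝ)).PosSemidef)
    (h1upp : (Real.exp ε₁ • (1 : Matrix (Fin n) (Fin n) ℝ) -
        (hP.posSemidef.sqrt)⁻¹ * Ps * ((hP.posSemidef.sqrt)⁻¹)ᵀ).PosSemidef)
    (h2low : ((hP.posSemidef.sqrt)ᵀ * Qs * hP.posSemidef.sqrt -
        Real.exp (-ε₂) • ((hP.posSemidef.sqrt)ᵀ * Q * hP.posSemidef.sqrt)).PosSemidef)
    (h2upp : (Real.exp ε₂ • ((hP.posSemidef.sqrt)ᵀ * Q * hP.posSemidef.sqrt) -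
        (hP.posSemidef.sqrt)ᵀ * Qs * hP.posSemidef.sqrt).PosSemidef) :
    ∀ i : Fin n,
      Real.exp (-(ε₁ + ε₂)) * eigAsc (hQ.posSemidef.sqrt * P * hQ.posSemidef.sqrt) i ≤
        eigAsc (hQs.posSemidef.sqrt * Ps * hQs.posSemidef.sqrt) i ∧
      eigAsc (hQs.posSemidef.sqrt * Ps * hQs.posSemidef.sqrt) i ≤
        Real.exp (ε₁ + ε₂) * eigAsc (hQ.posSemidef.sqrt * P * hQ.posSemidef.sqrt) i :=
  separation_principle_general n P Q Ps Qs ε₁ ε₂ hP hQ hPs hQs h1low h1upp h2low h2upp
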